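/- Let δ¹ = (10,20,21,23,25,27) and δ² = (10,23,21,20,25,27) in ℝ^6 with coordinates (x_12, x_13, x_14, x_23, x_24, x_34), and let δ³ = (δ¹ + δ²)/2. Then every u ∈ C(δ¹, U_4) and every u ∈ C(δ², U_4) satisfies u_12 < u_13 = u_23 < u_14 = u_24 = u_34 (topology (4(3(12)))), while every u ∈ C(δ³, U_4) satisfies u_12 < u_14 = u_24 < u_13 = u_23 = u_34 (topology (3(4(12)))). In particular, the set of dissimilarity maps all of whose l∞-closest ultrametrics have topology (4(3(12))) is not convex. -/

import Mathlib

/-!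
A closest ultrametric to `δ` is no farther from `δ` than any given ultrametric, so the explicit
ultrametrics `w₁` (within `3` of `δ₁` and of `δ₂`) and `w₃` (within `11/4` of `δ₃`) confine
every closest ultrametric to an `l∞`-box around `δ`. Inside that box, the isosceles property of
ultrametric triangles (the two longest sides are equal), applied to three triangles, pins the
topology down. The midpoint `δ₃` of
`δ₁` and `δ₂` does have closest ultrametrics, the ultrametrics being a closed set in a proper
space, and their topology `(3(4(12)))` is not `(4(3(12)))`.
-/

/-- Index set for unordered pairs of distinct elements of `{1,…,n}`: ordered pairs
`(i, j)` with `i < j`. -/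
abbrev PairIdx (n : ℕ) := {p : Fin n × Fin n // p.1 < p.2}

/-- A dissimilarity map on `n` elements: a point of `ℝ^(n choose 2)`, viewed as a
real-valued function on unordered pairs of distinct elements.  The product metric on this
type is exactly the `l∞`-metric. -/
abbrev DissimMap (n : ℕ) := PairIdx n → ℝ

/-- The value of a dissimilarity map on the unordered pair `{i, j}` (zero if `i = j`). -/
def dm {n : ℕ} (u : DissimMap n) (i j : Fin n) : ℝ :=
  if h : i < j then u ⟨(i, j), h⟩ else if h' : j < i then u ⟨(j, i), h'⟩ else 0

/-- The set of ultrametrics on `n` elements. -/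
def Ultrametrics (n : ℕ) : Set (DissimMap n) :=
  {u | ∀ i j k : Fin n, i ≠ j → i ≠ k → j ≠ k → dm u i j ≤ max (dm u i k) (dm u j k)}

/-- The set of points of `S` that are `l∞`-closest to `x`. -/
noncomputable def closestPts {n : ℕ} (x : DissimMap n) (S : Set (DissimMap n)) :
    Set (DissimMap n) :=
  {y ∈ S | dist x y = Metric.infDist x S}

/-- Build a dissimilarity map from a matrix of values. -/
def ofMat {n : ℕ} (A : Matrix (Fin n) (Fin n) ℝ) : DissimMap n := fun p => A p.1.1 p.1.2

/-- An ultrametric on `{1,2,3,4}` has rooted topology `(4(3(12)))`: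
`u₁₂ < u₁₃ = u₂₃ < u₁₄ = u₂₄ = u₃₄`. -/
def HasTop4_3_12 (u : DissimMap 4) : Prop :=
  dm u 0 1 < dm u 0 2 ∧ dm u 0 2 = dm u 1 2 ∧ dm u 0 2 < dm u 0 3 ∧
  dm u 0 3 = dm u 1 3 ∧ dm u 1 3 = dm u 2 3

/-- An ultrametric on `{1,2,3,4}` has rooted topology `(3(4(12)))`:
`u₁₂ < u₁₄ = u₂₄ < u₁₃ = u₂₃ = u₃₄`. -/
def HasTop3_4_12 (u : DissimMap 4) : Prop :=
  dm u 0 1 < dm u 0 3 ∧ dm u 0 3 = dm u 1 3 ∧ dm u 0 3 < dm u 0 2 ∧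
  dm u 0 2 = dm u 1 2 ∧ dm u 1 2 = dm u 2 3

lemma dm_comm {n : ℕ} (u : DissimMap n) (i j : Fin n) : dm u i j = dm u j i := by
  unfold dm
  rcases lt_trichotomy i j with h | rfl | h
  · simp [h, h.not_gt]
  · rfl
  · simp [h, h.not_gt]

lemma dm_add {n : ℕ} (u v : DissimMap n) (i j : Fin n) :
    dm (u + v) i j = dm u i j + dm v i j := by
  unfold dm; split_ifs <;> simp

lemma dm_smul {n : ℕ} (c : ℝ) (u : DissimMap n) (i j : Fin n) :
    dm (c • u) i j = c * dm u i j := by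
  unfold dm; split_ifs <;> simp

lemma continuous_dm {n : ℕ} (i j : Fin n) : Continuous fun u : DissimMap n => dm u i j := by
  unfold dm; split_ifs <;> fun_prop

lemma abs_dm_sub_dm_le_dist {n : ℕ} (x u : DissimMap n) (i j : Fin n) :
    |dm x i j - dm u i j| ≤ dist x u := by
  unfold dm
  split_ifs
  · exact dist_le_pi_dist x u _
  · exact dist_le_pi_dist x u _
  · simp

lemma dist_le_of_forall_abs_dm_sub_le {n : ℕ} {x u : DissimMap n} {r : ℝ} (hr : 0 ≤ r)
    (h : ∀ i j, |dm x i j - dm u i j| ≤ r) : dist x u ≤ r :=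
  (dist_pi_le_iff hr).2 fun p => by simpa [dm, p.2, Real.dist_eq] using h p.1.1 p.1.2

lemma isClosed_ultrametrics (n : ℕ) : IsClosed (Ultrametrics n) := by
  simp only [Ultrametrics, Set.ofPred_forall]
  exact isClosed_iInter fun i => isClosed_iInter fun j => isClosed_iInter fun k =>
    isClosed_iInter fun _ => isClosed_iInter fun _ => isClosed_iInter fun _ =>
      isClosed_le (continuous_dm i j) ((continuous_dm i k).max (continuous_dm j k))

lemma dm_eq_dm_of_lt_max {n : ℕ} {u : DissimMap n} (hu : u ∈ Ultrametrics n) {i j k : Fin n}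
    (h : dm u i j < max (dm u i k) (dm u j k)) (hij : i ≠ j := by decide)
    (hik : i ≠ k := by decide) (hjk : j ≠ k := by decide) :
    dm u i k = dm u j k := by
  have hi := hu i k j hik hij hjk.symm
  have hj := hu j k i hjk hij.symm hik.symm
  rw [dm_comm u k j] at hi
  rw [dm_comm u j i, dm_comm u k i] at hj
  rcases lt_max_iff.1 h with h | h <;> rcases le_max_iff.1 hi with hi | hi <;>
    rcases le_max_iff.1 hj with hj | hj <;> linarith

lemma closestPts_nonempty {n : ℕ} (x : DissimMap n) {S : Set (DissimMap n)} (hS : IsClosed S)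
    (hne : S.Nonempty) : (closestPts x S).Nonempty := by
  obtain ⟨y, hy, hxy⟩ := hS.exists_infDist_eq_dist hne x
  exact ⟨y, hy, hxy.symm⟩

lemma dist_le_of_mem_closestPts {n : ℕ} {x y w : DissimMap n} {S : Set (DissimMap n)}
    (hy : y ∈ closestPts x S) (hw : w ∈ S) : dist x y ≤ dist x w :=
  hy.2 ▸ Metric.infDist_le_dist_of_mem hw

lemma HasTop3_4_12.not_hasTop4_3_12 {u : DissimMap 4} (h : HasTop3_4_12 u) :
    ¬ HasTop4_3_12 u :=
  fun h' => h.2.2.1.not_gt h'.2.2.1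

noncomputable def δ₁ : DissimMap 4 := ofMat !![0,10,20,21; 10,0,23,25; 20,23,0,27; 21,25,27,0]

noncomputable def δ₂ : DissimMap 4 := ofMat !![0,10,23,21; 10,0,20,25; 23,20,0,27; 21,25,27,0]

noncomputable def δ₃ : DissimMap 4 := (1/2 : ℝ) • δ₁ + (1/2 : ℝ) • δ₂

noncomputable def w₁ : DissimMap 4 := ofMat !![0,10,20,24; 10,0,20,24; 20,20,0,24; 24,24,24,0]

noncomputable def w₃ : DissimMap 4 :=
  ofMat !![0,10,97/4,23; 10,0,97/4,23; 97/4,97/4,0,97/4; 23,23,97/4,0]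

lemma w₁_mem_ultrametrics : w₁ ∈ Ultrametrics 4 := by
  intro i j k _ _ _
  fin_cases i <;> fin_cases j <;> fin_cases k <;> simp +decide [w₁, dm, ofMat] at * <;> norm_num

lemma w₃_mem_ultrametrics : w₃ ∈ Ultrametrics 4 := by
  intro i j k _ _ _
  fin_cases i <;> fin_cases j <;> fin_cases k <;> simp +decide [w₃, dm, ofMat] at * <;> norm_num

lemma dist_δ₁_w₁_le : dist δ₁ w₁ ≤ 3 := by
  refine dist_le_of_forall_abs_dm_sub_le (by norm_num) fun i j => ?_
  fin_cases i <;> fin_cases j <;> simp +decide [δ₁, w₁, dm, ofMat] <;> norm_num [abs_le]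

lemma dist_δ₂_w₁_le : dist δ₂ w₁ ≤ 3 := by
  refine dist_le_of_forall_abs_dm_sub_le (by norm_num) fun i j => ?_
  fin_cases i <;> fin_cases j <;> simp +decide [δ₂, w₁, dm, ofMat] <;> norm_num [abs_le]

lemma dist_δ₃_w₃_le : dist δ₃ w₃ ≤ 11/4 := by
  refine dist_le_of_forall_abs_dm_sub_le (by norm_num) fun i j => ?_
  fin_cases i <;> fin_cases j <;>
    simp +decide [δ₃, δ₁, δ₂, w₃, dm, ofMat] <;> norm_num [abs_le]

lemma dm_δ₁ : dm δ₁ 0 1 = 10 ∧ dm δ₁ 0 2 = 20 ∧ dm δ₁ 0 3 = 21 ∧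
    dm δ₁ 1 2 = 23 ∧ dm δ₁ 1 3 = 25 ∧ dm δ₁ 2 3 = 27 := by
  simp [δ₁, dm, ofMat]

lemma dm_δ₂ : dm δ₂ 0 1 = 10 ∧ dm δ₂ 0 2 = 23 ∧ dm δ₂ 0 3 = 21 ∧
    dm δ₂ 1 2 = 20 ∧ dm δ₂ 1 3 = 25 ∧ dm δ₂ 2 3 = 27 := by
  simp [δ₂, dm, ofMat]

lemma dm_δ₃ : dm δ₃ 0 1 = 10 ∧ dm δ₃ 0 2 = 43/2 ∧ dm δ₃ 0 3 = 21 ∧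
    dm δ₃ 1 2 = 43/2 ∧ dm δ₃ 1 3 = 25 ∧ dm δ₃ 2 3 = 27 := by
  obtain ⟨a₁, b₁, c₁, d₁, e₁, f₁⟩ := dm_δ₁
  obtain ⟨a₂, b₂, c₂, d₂, e₂, f₂⟩ := dm_δ₂
  simp only [δ₃, dm_add, dm_smul, a₁, b₁, c₁, d₁, e₁, f₁, a₂, b₂, c₂, d₂, e₂, f₂]
  norm_num

lemma hasTop4_3_12_of_dist_δ₁_le {u : DissimMap 4} (hu : u ∈ Ultrametrics 4)
    (hd : dist δ₁ u ≤ 3) : HasTop4_3_12 u := by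
  have box i j := abs_le.1 ((abs_dm_sub_dm_le_dist δ₁ u i j).trans hd)
  obtain ⟨a, b, c, d, e, f⟩ := dm_δ₁
  obtain ⟨a₁, a₂⟩ := box 0 1; obtain ⟨b₁, b₂⟩ := box 0 2; obtain ⟨c₁, c₂⟩ := box 0 3
  obtain ⟨d₁, d₂⟩ := box 1 2; obtain ⟨e₁, e₂⟩ := box 1 3; obtain ⟨f₁, f₂⟩ := box 2 3
  have hcf : dm u 0 3 = dm u 2 3 :=
    dm_eq_dm_of_lt_max hu (lt_max_of_lt_right (by linarith))
  have hce : dm u 0 3 = dm u 1 3 :=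
    dm_eq_dm_of_lt_max hu (lt_max_of_lt_left (by linarith))
  have hbd : dm u 0 2 = dm u 1 2 :=
    dm_eq_dm_of_lt_max hu (lt_max_of_lt_left (by linarith))
  exact ⟨by linarith, hbd, by linarith, hce, hce.symm.trans hcf⟩

lemma hasTop4_3_12_of_dist_δ₂_le {u : DissimMap 4} (hu : u ∈ Ultrametrics 4)
    (hd : dist δ₂ u ≤ 3) : HasTop4_3_12 u := by
  have box i j := abs_le.1 ((abs_dm_sub_dm_le_dist δ₂ u i j).trans hd)
  obtain ⟨a, b, c, d, e, f⟩ := dm_δ₂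
  obtain ⟨a₁, a₂⟩ := box 0 1; obtain ⟨b₁, b₂⟩ := box 0 2; obtain ⟨c₁, c₂⟩ := box 0 3
  obtain ⟨d₁, d₂⟩ := box 1 2; obtain ⟨e₁, e₂⟩ := box 1 3; obtain ⟨f₁, f₂⟩ := box 2 3
  have hce : dm u 0 3 = dm u 1 3 :=
    dm_eq_dm_of_lt_max hu (lt_max_of_lt_left (by linarith))
  have hef : dm u 1 3 = dm u 2 3 :=
    dm_eq_dm_of_lt_max hu (lt_max_of_lt_right (by linarith))
  have hbd : dm u 0 2 = dm u 1 2 :=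
    dm_eq_dm_of_lt_max hu (lt_max_of_lt_left (by linarith))
  exact ⟨by linarith, hbd, by linarith, hce, hef⟩

lemma hasTop3_4_12_of_dist_δ₃_le {u : DissimMap 4} (hu : u ∈ Ultrametrics 4)
    (hd : dist δ₃ u ≤ 11/4) : HasTop3_4_12 u := by
  have box i j := abs_le.1 ((abs_dm_sub_dm_le_dist δ₃ u i j).trans hd)
  obtain ⟨a, b, c, d, e, f⟩ := dm_δ₃
  obtain ⟨a₁, a₂⟩ := box 0 1; obtain ⟨b₁, b₂⟩ := box 0 2; obtain ⟨c₁, c₂⟩ := box 0 3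
  obtain ⟨d₁, d₂⟩ := box 1 2; obtain ⟨e₁, e₂⟩ := box 1 3; obtain ⟨f₁, f₂⟩ := box 2 3
  rw [dm_comm u 2 3] at f₁ f₂
  have hce : dm u 0 3 = dm u 1 3 :=
    dm_eq_dm_of_lt_max hu (lt_max_of_lt_left (by linarith))
  have hdf : dm u 1 2 = dm u 3 2 :=
    dm_eq_dm_of_lt_max hu (lt_max_of_lt_right (by linarith))
  have hbf : dm u 0 2 = dm u 3 2 :=
    dm_eq_dm_of_lt_max hu (lt_max_of_lt_right (by linarith))
  exact ⟨by linarith, hce, by linarith, hbf.trans hdf.symm, hdf.trans (dm_comm u 3 2)⟩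

lemma forall_hasTop4_3_12_of_mem_closestPts_δ₁ :
    ∀ u ∈ closestPts δ₁ (Ultrametrics 4), HasTop4_3_12 u := fun _ hu =>
  hasTop4_3_12_of_dist_δ₁_le hu.1 <|
    (dist_le_of_mem_closestPts hu w₁_mem_ultrametrics).trans dist_δ₁_w₁_le

lemma forall_hasTop4_3_12_of_mem_closestPts_δ₂ :
    ∀ u ∈ closestPts δ₂ (Ultrametrics 4), HasTop4_3_12 u := fun _ hu =>
  hasTop4_3_12_of_dist_δ₂_le hu.1 <|
    (dist_le_of_mem_closestPts hu w₁_mem_ultrametrics).trans dist_δ₂_w₁_le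

lemma forall_hasTop3_4_12_of_mem_closestPts_δ₃ :
    ∀ u ∈ closestPts δ₃ (Ultrametrics 4), HasTop3_4_12 u := fun _ hu =>
  hasTop3_4_12_of_dist_δ₃_le hu.1 <|
    (dist_le_of_mem_closestPts hu w₃_mem_ultrametrics).trans dist_δ₃_w₃_le

/-- for `δ¹ = (10,20,21,23,25,27)`, `δ² = (10,23,21,20,25,27)` and their
midpoint `δ³`, every `l∞`-closest ultrametric to `δ¹` and to `δ²` has topology
`(4(3(12)))`, while every `l∞`-closest ultrametric to `δ³` has topology `(3(4(12)))`;
in particular the set of dissimilarity maps all of whose closest ultrametrics have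
topology `(4(3(12)))` is not convex. -/
theorem district_not_convex :
    (∀ u ∈ closestPts (ofMat !![0,10,20,21; 10,0,23,25; 20,23,0,27; 21,25,27,0])
      (Ultrametrics 4), HasTop4_3_12 u) ∧
    (∀ u ∈ closestPts (ofMat !![0,10,23,21; 10,0,20,25; 23,20,0,27; 21,25,27,0])
      (Ultrametrics 4), HasTop4_3_12 u) ∧
    (∀ u ∈ closestPts
      ((1/2 : ℝ) • ofMat !![0,10,20,21; 10,0,23,25; 20,23,0,27; 21,25,27,0] +
       (1/2 : ℝ) • ofMat !![0,10,23,21; 10,0,20,25; 23,20,0,27; 21,25,27,0])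
      (Ultrametrics 4), HasTop3_4_12 u) ∧
    ¬ Convex ℝ {δ : DissimMap 4 | ∀ u ∈ closestPts δ (Ultrametrics 4), HasTop4_3_12 u} := by
  refine ⟨forall_hasTop4_3_12_of_mem_closestPts_δ₁, forall_hasTop4_3_12_of_mem_closestPts_δ₂,
    forall_hasTop3_4_12_of_mem_closestPts_δ₃, fun hconv => ?_⟩
  have hδ₃ : δ₃ ∈ {δ : DissimMap 4 | ∀ u ∈ closestPts δ (Ultrametrics 4), HasTop4_3_12 u} :=
    hconv forall_hasTop4_3_12_of_mem_closestPts_δ₁ forall_hasTop4_3_12_of_mem_closestPts_δ₂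
      (by norm_num) (by norm_num) (by norm_num)
  obtain ⟨u, hu⟩ := closestPts_nonempty δ₃ (isClosed_ultrametrics 4) ⟨w₃, w₃_mem_ultrametrics⟩
  exact (forall_hasTop3_4_12_of_mem_closestPts_δ₃ u hu).not_hasTop4_3_12 (hδ₃ u hu)
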